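/- arXiv:2211.07282 — 2 statements merged into one kernel-verified Lean document; each statement's English description precedes it below -/
import Mathlib

section
/- Let (R, μ) be a measure space and let {f_j} be measurable functions with pairwise disjoint supports. If 0 < δ_j < δ_{j-1} is a decreasing sequence of positive reals, then the nonincreasing rearrangement of ∑_j f_j satisfies (∑_j f_j)*(t) ≥ ∑_j f_j*(t) χ_{(δ_j, δ_{j-1})}(t) for all t > 0. -/
open MeasureTheory

/-- The nonincreasing rearrangement `f*(t) = inf {λ > 0 : μ({|f| > λ}) ≤ t}`,
with values in `ℝ≥0∞`. -/
noncomputable def rearrangement {R : Type*} [MeasurableSpace R] (μ : Measure R)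
    (f : R → ℝ) (t : ℝ) : ENNReal :=
  sInf {l : ENNReal | μ {x | l < ENNReal.ofReal |f x| } ≤ ENNReal.ofReal t}

/-- If measurable functions `f j` have pairwise disjoint supports and `δ` is a strictly
decreasing positive sequence, then the nonincreasing rearrangement of `∑ j, f j` dominates
`∑ j, (f j)^* · χ_{(δ (j+1), δ j)}` pointwise on `(0, ∞)`. -/
theorem stmt1 {R : Type*} [MeasurableSpace R] (μ : Measure R) (f : ℕ → R → ℝ)
    (hmeas : ∀ j, Measurable (f j))
    (hdisj : Pairwise (Function.onFun Disjoint fun j => Function.support (f j)))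
    (δ : ℕ → ℝ) (hδpos : ∀ j, 0 < δ j) (hδdec : StrictAnti δ) :
    ∀ t : ℝ, 0 < t →
      (∑' j, Set.indicator (Set.Ioo (δ (j + 1)) (δ j)) (rearrangement μ (f j)) t) ≤
        rearrangement μ (fun x => ∑' j, f j x) t := by

  intro t ht
  have key : ∀ j x, |f j x| ≤ |∑' i, f i x| := by
    intro j x
    by_cases h : f j x = 0
    · simp [h, abs_nonneg]
    · have hz : ∀ i, i ≠ j → f i x = 0 := by
        intro i hi
        by_contra hne
        exact Set.disjoint_left.mp (hdisj hi) hne h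
      rw [tsum_eq_single j hz]
  have mono : ∀ j, rearrangement μ (f j) t ≤
      rearrangement μ (fun x => ∑' i, f i x) t := by
    intro j
    apply sInf_le_sInf
    intro l hl
    refine le_trans (μ.mono ?_) hl
    intro x hx
    exact lt_of_lt_of_le hx (ENNReal.ofReal_le_ofReal (key j x))
  by_cases hex : ∃ j, t ∈ Set.Ioo (δ (j + 1)) (δ j)
  · obtain ⟨j0, hj0⟩ := hex
    have hz : ∀ b, b ≠ j0 →
        Set.indicator (Set.Ioo (δ (b + 1)) (δ b)) (rearrangement μ (f b)) t = 0 := by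
      intro b hb
      apply Set.indicator_of_notMem
      intro hmem
      rcases lt_or_gt_of_ne hb with h | h
      · have : δ j0 ≤ δ (b + 1) := hδdec.antitone (Nat.succ_le_of_lt h)
        linarith [hj0.2, hmem.1]
      · have : δ b ≤ δ (j0 + 1) := hδdec.antitone (Nat.succ_le_of_lt h)
        linarith [hj0.1, hmem.2]
    rw [tsum_eq_single j0 hz, Set.indicator_of_mem hj0]
    exact mono j0
  · push_neg at hex
    have hz : ∀ j, Set.indicator (Set.Ioo (δ (j + 1)) (δ j)) (rearrangement μ (f j)) t = 0 :=
      fun j => Set.indicator_of_notMem (hex j) _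
    simp [hz]
end

section
/- For 1 ≤ p < p* < ∞, the n-th Bernstein number of the natural inclusion ℓ_p → ℓ_{p*} equals n^{(p - p*)/(p p*)} = n^{1/p* - 1/p}. -/
/-!
Lower bound: on the span of the first `n` unit vectors the power-mean inequality gives
`‖x‖_q ≥ n^(1/q - 1/p) ‖x‖_p`.

Upper bound: by Krein–Milman, `V ∩ [-1, 1]^ℕ` has an extreme point `y`, and `y` has at least
`dim V = n` coordinates of modulus one, since a vector of `V` vanishing on all of them could be
added to `y` in both directions. Hence `‖y‖_∞ ≤ 1 ≤ n^(-1/p) ‖y‖_p`, and for `x = y / ‖y‖_p`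
the interpolation `‖x‖_q^q ≤ ‖x‖_∞^(q-p) ‖x‖_p^p` gives `‖x‖_q ≤ n^(1/q - 1/p)`.
-/

open Filter Topology Finset Module
open scoped ENNReal

section

variable {ι : Type*}

lemma Filter.Tendsto.finite_setOf_le_abs {f : ι → ℝ} (hf : Tendsto f cofinite (𝓝 0)) {c : ℝ}
    (hc : 0 < c) : {j | c ≤ |f j|}.Finite := by
  simpa [Real.dist_eq] using eventually_cofinite.mp (hf.eventually (Metric.ball_mem_nhds 0 hc))

lemma eventually_forall_abs_add_mul_le_one {x h : ι → ℝ} (hx : Tendsto x cofinite (𝓝 0))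
    (hh : Tendsto h cofinite (𝓝 0)) (hx1 : ∀ j, |x j| ≤ 1) (hxh : ∀ j, |x j| = 1 → h j = 0) :
    ∀ᶠ ε in 𝓝 (0 : ℝ), ∀ j, |x j + ε * h j| ≤ 1 := by
  set S := {j | 1 / 2 ≤ |x j|} ∪ {j | 1 ≤ |h j|}
  have hS : S.Finite :=
    (hx.finite_setOf_le_abs (by norm_num)).union (hh.finite_setOf_le_abs one_pos)
  have hnear : ∀ᶠ ε in 𝓝 (0 : ℝ), ∀ j ∈ S, |x j + ε * h j| ≤ 1 := by
    refine hS.eventually_all.2 fun j _ => ?_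
    rcases (hx1 j).lt_or_eq with hlt | heq
    · have hcont : Tendsto (fun ε : ℝ => |x j + ε * h j|) (𝓝 0) (𝓝 |x j|) := by
        simpa using ((continuous_const.add (continuous_id.mul continuous_const)).abs).tendsto
          (0 : ℝ)
      exact (hcont.eventually (eventually_lt_nhds hlt)).mono fun _ => le_of_lt
    · simp [hxh j heq, heq]
  have hsmall : ∀ᶠ ε in 𝓝 (0 : ℝ), |ε| ≤ 1 / 2 :=
    (continuous_abs.tendsto' 0 0 abs_zero).eventually (eventually_le_nhds (by norm_num))
  filter_upwards [hnear, hsmall] with ε hnear hε j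
  by_cases hj : j ∈ S
  · exact hnear j hj
  · simp only [S, Set.mem_union, Set.mem_ofPred_eq, not_or, not_le] at hj
    calc |x j + ε * h j| ≤ |x j| + |ε| * |h j| := (abs_add_le _ _).trans_eq (by rw [abs_mul])
      _ ≤ 1 / 2 + 1 / 2 * 1 := by gcongr <;> linarith
      _ = 1 := by norm_num

theorem Submodule.exists_abs_le_one_finrank_le_card (V : Submodule ℝ (ι → ℝ))
    [FiniteDimensional ℝ V] (hV : ∀ f ∈ V, Tendsto f cofinite (𝓝 0)) :
    ∃ f ∈ V, (∀ j, |f j| ≤ 1) ∧ ∃ s : Finset ι, finrank ℝ V ≤ #s ∧ ∀ j ∈ s, |f j| = 1 := by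
  set K : Set (ι → ℝ) := V ∩ Set.univ.pi fun _ => Set.Icc (-1) 1
  have hK : IsCompact K :=
    (isCompact_univ_pi fun _ => isCompact_Icc).inter_left V.closed_of_finiteDimensional
  obtain ⟨x, hxext⟩ := hK.extremePoints_nonempty ⟨0, V.zero_mem, fun _ _ => by simp⟩
  obtain ⟨⟨hxV, hxcube⟩, hxK⟩ := mem_extremePoints_iff_left.1 hxext
  have hx1 : ∀ j, |x j| ≤ 1 := fun j => abs_le.2 (hxcube j (Set.mem_univ j))
  set s := ((hV x hxV).finite_setOf_le_abs one_pos).toFinset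
  have hs : ∀ j, j ∈ s ↔ |x j| = 1 := fun j => by simp [s, (hx1 j).ge_iff_eq]
  refine ⟨x, hxV, hx1, s, ?_, fun j hj => (hs j).1 hj⟩
  have hker : ∀ h ∈ V, (∀ j ∈ s, h j = 0) → h = 0 := by
    intro h hhV hhs
    have hK' : ∀ g ∈ V, (∀ j ∈ s, g j = 0) → ∀ᶠ ε in 𝓝 (0 : ℝ), x + ε • g ∈ K :=
      fun g hgV hgs => (eventually_forall_abs_add_mul_le_one (hV x hxV) (hV g hgV) hx1
        fun j hj => hgs j ((hs j).2 hj)).mono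
          fun ε hε => ⟨V.add_mem hxV (V.smul_mem ε hgV), fun j _ => abs_le.1 (hε j)⟩
    have hboth := (hK' h hhV hhs).and (hK' (-h) (V.neg_mem hhV) (by simpa using hhs))
    obtain ⟨ε, ⟨hplus, hminus⟩, hε0⟩ :=
      ((hboth.filter_mono nhdsWithin_le_nhds).and (self_mem_nhdsWithin (s := {0}ᶜ))).exists
    rw [smul_neg, ← sub_eq_add_neg] at hminus
    have hx : x - ε • h = x := hxK _ hminus _ hplus (mem_openSegment_sub_add x (ε • h))
    simpa [show ε ≠ 0 from hε0] using hx
  let r : V →ₗ[ℝ] (s → ℝ) := (LinearMap.pi fun j : s => LinearMap.proj (j : ι)).comp V.subtype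
  have hr : Function.Injective r := by
    rw [← LinearMap.ker_eq_bot, LinearMap.ker_eq_bot']
    intro h hh
    exact Subtype.ext (hker h h.2 fun j hj => congrFun hh ⟨j, hj⟩)
  simpa using LinearMap.finrank_le_finrank_of_injective hr

lemma tsum_abs_rpow_le_mul_tsum_abs_rpow {f : ι → ℝ} {p q c : ℝ} (hpq : p ≤ q)
    (hq : q ≠ 0) (hf : Summable fun j => |f j| ^ p) (hc : ∀ j, |f j| ≤ c) :
    ∑' j, |f j| ^ q ≤ c ^ (q - p) * ∑' j, |f j| ^ p := by
  have hterm : ∀ j, |f j| ^ q ≤ c ^ (q - p) * |f j| ^ p := fun j => by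
    rw [← sub_add_cancel q p, Real.rpow_add' (abs_nonneg _) (by simpa using hq),
      add_sub_cancel_right]
    gcongr
    exact hc j
  rw [← tsum_mul_left]
  exact ((hf.mul_left _).of_nonneg_of_le (fun j => by positivity) hterm).tsum_le_tsum hterm
    (hf.mul_left _)

lemma Finset.rpow_sum_abs_rpow_le (s : Finset ι) (f : ι → ℝ) {p r : ℝ} (hp : 0 < p)
    (hpr : p ≤ r) :
    (∑ i ∈ s, |f i| ^ p) ^ (1 / p) ≤
      (#s : ℝ) ^ (1 / p - 1 / r) * (∑ i ∈ s, |f i| ^ r) ^ (1 / r) := by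
  have hr : 0 < r := hp.trans_le hpr
  have h := Real.rpow_sum_le_const_mul_sum_rpow_of_nonneg s ((one_le_div hp).2 hpr)
    (f := fun i => |f i| ^ p) fun i _ => by positivity
  simp only [← Real.rpow_mul (abs_nonneg _), mul_div_cancel₀ _ hp.ne'] at h
  calc (∑ i ∈ s, |f i| ^ p) ^ (1 / p) = ((∑ i ∈ s, |f i| ^ p) ^ (r / p)) ^ (1 / r) := by
        rw [← Real.rpow_mul (by positivity)]
        field_simp
    _ ≤ ((#s : ℝ) ^ (r / p - 1) * ∑ i ∈ s, |f i| ^ r) ^ (1 / r) := by gcongr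
    _ = _ := by
      rw [Real.mul_rpow (by positivity) (by positivity), ← Real.rpow_mul (by positivity)]
      congr 2
      field_simp

end

namespace lp

variable {ι : Type*} {p : ℝ≥0∞}

lemma tendsto_cofinite_zero (hp : 0 < p.toReal) (x : lp (fun _ : ι => ℝ) p) :
    Tendsto (x : ι → ℝ) cofinite (𝓝 0) := by
  rw [tendsto_zero_iff_norm_tendsto_zero]
  have h := (Real.continuousAt_rpow_const 0 p.toReal⁻¹ (Or.inr (by positivity))).tendsto.comp
    ((lp.memℓp x).summable hp).tendsto_cofinite_zero
  simpa [Function.comp_def, Real.rpow_rpow_inv (norm_nonneg _) hp.ne', Real.zero_rpow,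
    hp.ne'] using h

lemma tsum_abs_rpow_eq_norm_rpow (hp : 0 < p.toReal) (x : lp (fun _ : ι => ℝ) p) :
    ∑' j, |x j| ^ p.toReal = ‖x‖ ^ p.toReal := by
  simp [lp.norm_rpow_eq_tsum hp]

lemma exists_abs_le_one_finrank_le_norm_rpow (hp : 0 < p.toReal)
    (V : Submodule ℝ (lp (fun _ : ι => ℝ) p)) [FiniteDimensional ℝ V] :
    ∃ y ∈ V, (∀ j, |y j| ≤ 1) ∧ (finrank ℝ V : ℝ) ≤ ‖y‖ ^ p.toReal := by
  let coe : lp (fun _ : ι => ℝ) p →ₗ[ℝ] (ι → ℝ) := LinearMap.pi (lp.evalₗ _ p)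
  have hcoe : Function.Injective coe := fun x y hxy => lp.ext hxy
  obtain ⟨f, ⟨y, hyV, rfl⟩, hf1, s, hs, hsf⟩ := (V.map coe).exists_abs_le_one_finrank_le_card
    (by rintro _ ⟨y, -, rfl⟩; exact tendsto_cofinite_zero hp y)
  have hsf' : ∀ j ∈ s, |y j| = 1 := hsf
  refine ⟨y, hyV, hf1, ?_⟩
  rw [← (V.equivMapOfInjective coe hcoe).finrank_eq] at hs
  calc (finrank ℝ V : ℝ) ≤ #s := by exact_mod_cast hs
    _ = ∑ j ∈ s, ‖y j‖ ^ p.toReal := by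
      rw [Finset.sum_congr rfl fun j hj => by rw [Real.norm_eq_abs, hsf' j hj, Real.one_rpow]]
      simp
    _ ≤ ‖y‖ ^ p.toReal := lp.sum_rpow_le_norm_rpow hp y s

lemma exists_norm_eq_one_abs_le (hp : 0 < p.toReal) (V : Submodule ℝ (lp (fun _ : ι => ℝ) p))
    [FiniteDimensional ℝ V] (hV : 0 < finrank ℝ V) :
    ∃ x ∈ V, ‖x‖ = 1 ∧ ∀ j, |x j| ≤ (finrank ℝ V : ℝ) ^ (-(1 / p.toReal)) := by
  obtain ⟨y, hyV, hy1, hy⟩ := exists_abs_le_one_finrank_le_norm_rpow hp V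
  have hn : (0 : ℝ) < finrank ℝ V := by exact_mod_cast hV
  have hy' : (finrank ℝ V : ℝ) ^ (1 / p.toReal) ≤ ‖y‖ := by
    simpa [← Real.rpow_mul (lp.norm_nonneg' y), hp.ne'] using
      Real.rpow_le_rpow hn.le hy (one_div_nonneg.2 hp.le)
  have hy0 : 0 < ‖y‖ := (Real.rpow_pos_of_pos hn _).trans_le hy'
  refine ⟨‖y‖⁻¹ • y, V.smul_mem _ hyV, ?_, fun j => ?_⟩
  · rw [lp.norm_const_smul (ENNReal.toReal_pos_iff.1 hp).1.ne', norm_inv,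
      Real.norm_of_nonneg hy0.le, inv_mul_cancel₀ hy0.ne']
  · rw [lp.coeFn_smul, Pi.smul_apply, smul_eq_mul, abs_mul, abs_inv, abs_of_pos hy0,
      Real.rpow_neg hn.le]
    calc ‖y‖⁻¹ * |y j| ≤ ‖y‖⁻¹ := mul_le_of_le_one_right (by positivity) (hy1 j)
      _ ≤ _ := inv_anti₀ (by positivity) hy'

theorem exists_norm_eq_one_tsum_rpow_le {r : ℝ} (hp : 0 < p.toReal) (hpr : p.toReal ≤ r)
    (V : Submodule ℝ (lp (fun _ : ι => ℝ) p)) [FiniteDimensional ℝ V] (hV : 0 < finrank ℝ V) :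
    ∃ x ∈ V, ‖x‖ = 1 ∧
      (∑' j, |x j| ^ r) ^ (1 / r) ≤ (finrank ℝ V : ℝ) ^ (1 / r - 1 / p.toReal) := by
  obtain ⟨x, hxV, hx1, hxc⟩ := exists_norm_eq_one_abs_le hp V hV
  refine ⟨x, hxV, hx1, ?_⟩
  have hr : 0 < r := hp.trans_le hpr
  have hn : (0 : ℝ) ≤ finrank ℝ V := Nat.cast_nonneg _
  have hsum : Summable fun j => |x j| ^ p.toReal := by
    simpa using (lp.memℓp x).summable hp
  have h := tsum_abs_rpow_le_mul_tsum_abs_rpow hpr hr.ne' hsum hxc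
  rw [tsum_abs_rpow_eq_norm_rpow hp, hx1, Real.one_rpow, mul_one, ← Real.rpow_mul hn] at h
  calc (∑' j, |x j| ^ r) ^ (1 / r)
      ≤ ((finrank ℝ V : ℝ) ^ (-(1 / p.toReal) * (r - p.toReal))) ^ (1 / r) := by gcongr
    _ = _ := by
      rw [← Real.rpow_mul hn]
      congr 1
      field_simp
      ring

variable (p) in
def supported (s : Finset ι) : Submodule ℝ (lp (fun _ : ι => ℝ) p) where
  carrier := {x | ∀ j ∉ s, x j = 0}
  add_mem' hx hy j hj := by simp [hx j hj, hy j hj]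
  zero_mem' _ _ := rfl
  smul_mem' c x hx j hj := by simp [hx j hj]

lemma finrank_supported (s : Finset ι) : finrank ℝ (supported p s) = #s := by
  classical
  let r : supported p s →ₗ[ℝ] (s → ℝ) :=
    (LinearMap.pi fun j : s => lp.evalₗ (fun _ => ℝ) p (j : ι)).comp (supported p s).subtype
  have hr : Function.Bijective r := by
    refine ⟨fun x y hxy => Subtype.ext (lp.ext (funext fun j => ?_)), fun c => ?_⟩
    · by_cases hj : j ∈ s
      · exact congrFun hxy ⟨j, hj⟩
      · rw [x.2 j hj, y.2 j hj]
    · let f : ι → ℝ := fun j => if h : j ∈ s then c ⟨j, h⟩ else 0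
      have hf : Memℓp f p := (memℓp_zero (s.finite_toSet.subset fun j hj => by
        by_contra h
        exact hj (dif_neg h))).of_exponent_ge zero_le
      exact ⟨⟨⟨f, hf⟩, fun j hj => dif_neg hj⟩, funext fun j => dif_pos j.2⟩
  rw [(LinearEquiv.ofBijective r hr).finrank_eq, finrank_fintype_fun_eq_card, Fintype.card_coe]

theorem rpow_le_tsum_rpow_of_mem_supported {r : ℝ} (hp : 0 < p.toReal) (hpr : p.toReal ≤ r)
    {s : Finset ι} {x : lp (fun _ : ι => ℝ) p} (hx : x ∈ supported p s) (hx1 : ‖x‖ = 1) :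
    (#s : ℝ) ^ (1 / r - 1 / p.toReal) ≤ (∑' j, |x j| ^ r) ^ (1 / r) := by
  have hr : 0 < r := hp.trans_le hpr
  have htsum : ∀ t : ℝ, t ≠ 0 → ∑' j, |x j| ^ t = ∑ j ∈ s, |x j| ^ t := fun t ht =>
    tsum_eq_sum fun j hj => by simp [hx j hj, Real.zero_rpow ht]
  have h := s.rpow_sum_abs_rpow_le x hp hpr
  rw [← htsum _ hp.ne', tsum_abs_rpow_eq_norm_rpow hp, hx1, Real.one_rpow, Real.one_rpow,
    ← htsum _ hr.ne'] at h
  have hpos : 0 < (#s : ℝ) ^ (1 / p.toReal - 1 / r) := by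
    refine (Real.rpow_nonneg (Nat.cast_nonneg _) _).lt_of_ne fun h0 => ?_
    rw [← h0, zero_mul] at h
    exact one_pos.not_ge h
  rw [← neg_sub, Real.rpow_neg (Nat.cast_nonneg _)]
  exact (inv_le_iff_one_le_mul₀ hpos).2 (by rwa [mul_comm])

end lp

/-- The `n`-th Bernstein number of the natural inclusion `ℓ_p → ℓ_q` for `1 ≤ p < q < ∞`
equals `n^(1/q - 1/p)`.  The Bernstein number is written out explicitly as the supremum
over `n`-dimensional subspaces `V` of `ℓ_p` of the infimum over unit vectors `x ∈ V` of
the `ℓ_q` norm of `x`. -/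
theorem stmt7 (p q : ENNReal) (hp : 1 ≤ p) (hpq : p < q) (hq : q ≠ ⊤)
    (n : ℕ) (hn : 1 ≤ n) :
    (⨆ V : {V : Submodule ℝ (lp (fun _ : ℕ => ℝ) p) // Module.finrank ℝ V = n},
      ⨅ x : {x : lp (fun _ : ℕ => ℝ) p // x ∈ V.1 ∧ ‖x‖ = 1},
        (∑' j, |(x.1 : ∀ _ : ℕ, ℝ) j| ^ q.toReal) ^ (1 / q.toReal)) =
      (n : ℝ) ^ (1 / q.toReal - 1 / p.toReal) := by
  have hp0 : 0 < p.toReal := ENNReal.toReal_pos (one_pos.trans_le hp).ne' hpq.ne_top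
  have hpq' : p.toReal ≤ q.toReal := ENNReal.toReal_mono hq hpq.le
  have hupper : ∀ V : {V : Submodule ℝ (lp (fun _ : ℕ => ℝ) p) // finrank ℝ V = n},
      ⨅ x : {x : lp (fun _ : ℕ => ℝ) p // x ∈ V.1 ∧ ‖x‖ = 1},
        (∑' j, |(x.1 : ∀ _ : ℕ, ℝ) j| ^ q.toReal) ^ (1 / q.toReal) ≤
      (n : ℝ) ^ (1 / q.toReal - 1 / p.toReal) := by
    rintro ⟨V, rfl⟩
    have := Module.finite_of_finrank_pos hn
    obtain ⟨x, hxV, hx1, hle⟩ := lp.exists_norm_eq_one_tsum_rpow_le hp0 hpq' V hn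
    exact ciInf_le_of_le ⟨0, by rintro _ ⟨y, rfl⟩; positivity⟩ ⟨x, hxV, hx1⟩ hle
  have hV₀ : finrank ℝ (lp.supported p (range n)) = n := by rw [lp.finrank_supported, card_range]
  have : Nonempty {V : Submodule ℝ (lp (fun _ : ℕ => ℝ) p) // finrank ℝ V = n} := ⟨⟨_, hV₀⟩⟩
  have : Nonempty {x : lp (fun _ : ℕ => ℝ) p // x ∈ lp.supported p (range n) ∧ ‖x‖ = 1} :=
    ⟨lp.single p 0 1, fun j hj => lp.single_apply_ne p 0 1 (by simp at hj; omega),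
      by simpa using lp.norm_single (E := fun _ : ℕ => ℝ) (one_pos.trans_le hp) 0 1⟩
  refine le_antisymm (ciSup_le hupper)
    (le_ciSup_of_le ⟨_, Set.forall_mem_range.2 hupper⟩ ⟨_, hV₀⟩ (le_ciInf fun x => ?_))
  simpa using lp.rpow_le_tsum_rpow_of_mem_supported hp0 hpq' x.2.1 x.2.2
end
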